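/- arXiv:2601.13321 — 3 statements merged into one kernel-verified Lean document; each statement's English description precedes it below -/
import Mathlib

section
/- Let λ be an infinite cardinal and set λ' = 2^{<λ}. Then (λ')^{<cof(λ)} = λ', where cof(λ) is the cofinality of λ, and the space ᴧ2 of all functions from λ to 2 with the bounded topology is homeomorphic to a closed subspace of the space of all functions from cof(λ) to λ' with the bounded topology. -/
open Cardinal Set

noncomputable section

/-- The type of `ι`-indexed sequences in `A`, as a type synonym carrying the bounded topology. -/
def GSeq (ι A : Type) : Type := ι → A

/-- The bounded topology on `GSeq ι A`: the topology generated by the cones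
`N_s = {y | ∀ i < b, y i = x i}`. -/
instance GSeq.topologicalSpace (ι A : Type) [LinearOrder ι] : TopologicalSpace (GSeq ι A) :=
  TopologicalSpace.generateFrom
    {C : Set (GSeq ι A) | ∃ (x : ι → A) (b : ι), C = {y : GSeq ι A | ∀ i, i < b → y i = x i}}

/-- The weight of a topological space: the least cardinality of a basis for its topology. -/
def tweight (X : Type) [TopologicalSpace X] : Cardinal :=
  ⨅ B : {B : Set (Set X) // TopologicalSpace.IsTopologicalBasis B}, #↥(B.1)

/-- `S` is a positively totally ordered monoid (on top of given `AddMonoid` and `LinearOrder`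
structures): the addition is weakly monotone in both arguments, `0` is the least element, and
the positive cone `S⁺ = {a | 0 < a}` is nonempty. -/
structure IsPTOM (S : Type*) [AddMonoid S] [LinearOrder S] : Prop where
  add_le_add : ∀ a b c d : S, a ≤ b → c ≤ d → a + c ≤ b + d
  zero_le : ∀ a : S, 0 ≤ a
  exists_pos : ∃ a : S, 0 < a

/-- The sum of `f` over a finite set `F` of indices, taken in increasing order of the indices. -/
def finSum {ι : Type*} [LinearOrder ι] {S : Type*} [AddMonoid S] (f : ι → S) (F : Finset ι) : S :=
  ((F.sort (· ≤ ·)).map f).sum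

/-- `μ` is a continuous measure: every singleton is measurable and has measure `0`. -/
def MeasureContinuous {X : Type} [TopologicalSpace X] {S : Type*} [Zero S]
    (M : Set (Set X)) (μ : Set X → S) : Prop :=
  ∀ x : X, {x} ∈ M ∧ μ {x} = 0

/-! Write `λ' = 2^<λ = sup_{μ<λ} 2^μ` and `κ = cof λ`. Fewer than `κ` cardinals below `λ` are
bounded below `λ`, so a function from `γ < κ` into the initial well-order of type `λ'` takes all
its values below some `2^μ` with `μ < λ`; hence `(λ')^γ ≤ λ · sup_{μ<λ} 2^{μγ} = λ'`.

For the embedding fix a strictly increasing cofinal sequence `(g_i)_{i<κ}` in `λ` and injections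
`c_i` of `2^{g_i}` into `λ'`. Then `x ↦ (c_i (x ↾ g_i))_{i<κ}` is continuous because `g` is
monotone, and a homeomorphism onto its image because `g` is cofinal; the image is closed because
a point whose bounded restrictions are all matched by images is the image of the function glued
from those preimages. -/

open Ordinal Topology

namespace GSeq

section Topology

variable {ι A : Type} [LinearOrder ι]

def cone (x : ι → A) (b : ι) : Set (GSeq ι A) :=
  {y | ∀ i, i < b → y i = x i}

theorem isOpen_cone (x : ι → A) (b : ι) : IsOpen (cone x b) :=
  TopologicalSpace.isOpen_generateFrom_of_mem ⟨x, b, rfl⟩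

theorem mem_cone_self (x : GSeq ι A) (b : ι) : x ∈ cone x b :=
  fun _ _ => rfl

theorem isOpen_of_forall_exists_cone_subset {s : Set (GSeq ι A)}
    (h : ∀ x ∈ s, ∃ b, cone x b ⊆ s) : IsOpen s :=
  isOpen_iff_forall_mem_open.2 fun x hx =>
    let ⟨b, hb⟩ := h x hx
    ⟨cone x b, hb, isOpen_cone x b, mem_cone_self x b⟩

theorem continuous_of_isOpen_preimage_cone {X : Type*} [TopologicalSpace X] {f : X → GSeq ι A}
    (h : ∀ x b, IsOpen (f ⁻¹' cone x b)) : Continuous f :=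
  continuous_generateFrom_iff.2 <| by
    rintro _ ⟨x, b, rfl⟩
    exact h x b

theorem isInducing_of_cone_eq_preimage {X : Type*} [TopologicalSpace X] {f : GSeq ι A → X}
    (hf : Continuous f) (h : ∀ x b, ∃ U, IsOpen U ∧ f ⁻¹' U = cone x b) : IsInducing f :=
  ⟨le_antisymm (continuous_iff_le_induced.1 hf) <| le_generateFrom fun _ ⟨x, b, hs⟩ =>
    hs ▸ isOpen_induced_iff.2 (h x b)⟩

end Topology

section RestrictCode

variable {ι κ A B : Type} [LinearOrder ι]

def restrictCode (g : κ → ι) (c : ∀ i, (Iio (g i) → B) ↪ A) (x : GSeq ι B) : GSeq κ A :=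
  fun i => c i fun j => x j

variable {g : κ → ι} {c : ∀ i, (Iio (g i) → B) ↪ A}

theorem eq_of_restrictCode_eq {x y : GSeq ι B} {i : κ}
    (h : restrictCode g c x i = restrictCode g c y i) {a : ι} (ha : a < g i) : x a = y a :=
  congrFun ((c i).injective h) ⟨a, ha⟩

theorem restrictCode_injective (hcof : ∀ a, ∃ i, a < g i) : Function.Injective (restrictCode g c) :=
  fun _ _ h => funext fun a =>
    let ⟨i, hi⟩ := hcof a
    eq_of_restrictCode_eq (congrFun h i) hi

variable [LinearOrder κ]

theorem continuous_restrictCode (hg : Monotone g) : Continuous (restrictCode g c) := by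
  refine continuous_of_isOpen_preimage_cone fun z b => isOpen_of_forall_exists_cone_subset ?_
  intro x hx
  refine ⟨g b, fun y hy i hi => (hx i hi).symm ▸ congrArg (c i) (funext fun j => ?_)⟩
  exact hy j (j.2.trans_le (hg hi.le))

theorem isInducing_restrictCode [NoMaxOrder κ] (hg : Monotone g) (hcof : ∀ a, ∃ i, a < g i) :
    IsInducing (restrictCode g c) := by
  refine isInducing_of_cone_eq_preimage (continuous_restrictCode hg) fun z a => ?_
  obtain ⟨i, hi⟩ := hcof a
  obtain ⟨b, hb⟩ := exists_gt i
  refine ⟨⋃ x ∈ cone z a, cone (restrictCode g c x) b,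
    isOpen_biUnion fun x _ => isOpen_cone _ _, Set.ext fun y => ⟨fun hy => ?_, fun hy => ?_⟩⟩
  · obtain ⟨x, hx, hxy⟩ := mem_iUnion₂.1 hy
    intro j hj
    rw [eq_of_restrictCode_eq (hxy i hb) (hj.trans hi)]
    exact hx j hj
  · exact mem_iUnion₂.2 ⟨y, hy, mem_cone_self _ _⟩

theorem isClosed_range_restrictCode [NoMaxOrder κ] (hcof : ∀ a, ∃ i, a < g i) :
    IsClosed (range (restrictCode g c)) := by
  refine isOpen_compl_iff.1 (isOpen_of_forall_exists_cone_subset fun y hy => ?_)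
  by_contra! hdense
  have hx : ∀ b, ∃ x, ∀ i, i < b → restrictCode g c x i = y i := fun b => by
    obtain ⟨_, hw, hmem⟩ := not_subset.1 (hdense b)
    obtain ⟨x, rfl⟩ := notMem_compl_iff.1 hmem
    exact ⟨x, hw⟩
  choose x hx using hx
  choose ia hia using hcof
  choose succ hsucc using fun i : κ => exists_gt i
  -- glue the approximants: `x b` and `x b'` agree below `g i` whenever `i < b` and `i < b'`
  refine hy ⟨fun a => x (succ (ia a)) a, funext fun i => ?_⟩
  rw [← hx (succ i) i (hsucc i)]
  refine congrArg (c i) (funext fun j => ?_)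
  have hk : min (ia j) i < succ (ia j) ∧ min (ia j) i < succ i :=
    ⟨(min_le_left _ _).trans_lt (hsucc _), (min_le_right _ _).trans_lt (hsucc _)⟩
  refine eq_of_restrictCode_eq ((hx _ _ hk.1).trans (hx _ _ hk.2).symm) ?_
  rcases min_choice (ia j) i with h | h <;> rw [h]
  exacts [hia j, j.2]

theorem isClosedEmbedding_restrictCode [NoMaxOrder κ] (hg : Monotone g)
    (hcof : ∀ a, ∃ i, a < g i) : IsClosedEmbedding (restrictCode g c) :=
  ⟨⟨isInducing_restrictCode hg hcof, restrictCode_injective hcof⟩,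
    isClosed_range_restrictCode hcof⟩

end RestrictCode

end GSeq

theorem Ordinal.exists_strictMono_cof_toType (o : Ordinal) [NoMaxOrder o.ToType] :
    ∃ g : o.cof.ord.ToType → o.ToType, StrictMono g ∧ ∀ a, ∃ i, a < g i := by
  obtain ⟨s, hs, htype⟩ := exists_ord_cof_eq o.ToType
  rw [cof_toType] at htype
  obtain ⟨e⟩ := type_eq.1 (htype.trans (type_toType _).symm)
  refine ⟨fun i => (OrderIso.ofRelIsoLT e).symm i,
    (Subtype.strictMono_coe _).comp (OrderIso.ofRelIsoLT e).symm.strictMono, fun a => ?_⟩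
  obtain ⟨a', ha'⟩ := exists_gt a
  obtain ⟨y, hy, hay⟩ := hs a'
  exact ⟨OrderIso.ofRelIsoLT e ⟨y, hy⟩, by simpa using ha'.trans_le hay⟩

universe u

namespace Cardinal

theorem le_two_powerlt (c : Cardinal) : c ≤ 2 ^< c :=
  le_of_forall_lt fun _ hb => (cantor _).trans_le (le_powerlt 2 hb)

theorem mk_arrow_le_of_monotone_cover {G A L : Type u} [Preorder L] {B : L → Set A}
    (hB : Monotone B) (hcover : ∀ a, ∃ l, a ∈ B l) (hbdd : ∀ f : G → L, BddAbove (range f)) :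
    #(G → A) ≤ #L * ⨆ l, #(G → B l) := by
  have hunion : (Set.univ : Set (G → A)) ⊆ ⋃ l, {f | ∀ j, f j ∈ B l} := fun f _ => by
    choose lf hlf using fun j => hcover (f j)
    obtain ⟨l, hl⟩ := hbdd lf
    exact mem_iUnion.2 ⟨l, fun j => hB (hl (mem_range_self j)) (hlf j)⟩
  calc #(G → A) = #(Set.univ : Set (G → A)) := mk_univ.symm
    _ ≤ #(⋃ l, {f : G → A | ∀ j, f j ∈ B l}) := mk_le_mk_of_subset hunion
    _ ≤ #L * ⨆ l, #{f : G → A | ∀ j, f j ∈ B l} := mk_iUnion_le _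
    _ = #L * ⨆ l, #(G → B l) := by
      congr 2 with l
      exact mk_congr Equiv.subtypePiEquivPi

theorem bddAbove_range_of_mk_lt_cof {G L : Type u} [LinearOrder L] (f : G → L)
    (hf : #G < Order.cof L) : BddAbove (range f) := by
  by_contra h
  exact ((Order.cof_le (IsCofinal.of_not_bddAbove h)).trans mk_range_le).not_gt hf

theorem mk_setOf_mk_Iio_lt_le {A : Type u} [LinearOrder A] [WellFoundedLT A] (κ : Cardinal.{u}) :
    #{a : A | #(Iio a) < κ} ≤ κ := by
  have hlt (a : {a : A | #(Iio a) < κ}) : typein (α := A) (· < ·) a < κ.ord := lt_ord.2 a.2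
  calc #{a : A | #(Iio a) < κ} ≤ #κ.ord.ToType :=
        mk_le_of_injective (f := fun a => ToType.mk ⟨_, hlt a⟩) fun a b h => Subtype.ext <|
          typein_injective _ (congrArg Subtype.val (ToType.mk.injective h))
    _ = κ := mk_ord_toType κ

theorem mk_Iio_toType_mk {o : Ordinal} (x : Iio o) : #(Iio (ToType.mk x)) = x.1.card := by
  have h : typein (α := o.ToType) (· < ·) (ToType.mk x) = x.1 :=
    congrArg Subtype.val (ToType.mk.symm_apply_apply x)
  rw [← h, card_typein]
  rfl

theorem mk_Iio_ord_toType_lt {c : Cardinal} (i : c.ord.ToType) : #(Iio i) < c :=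
  (mk_Iio_lt i (by simp)).trans_eq (mk_ord_toType c)

theorem exists_lt_two_power_mk_Iio {lam c : Cardinal} (hc : c < 2 ^< lam) :
    ∃ l : lam.ord.ToType, c < 2 ^ #(Iio l) := by
  by_contra! h
  refine hc.not_ge (powerlt_le.2 fun μ hμ => ?_)
  simpa [mk_Iio_toType_mk] using h (ToType.mk ⟨μ.ord, ord_lt_ord.2 hμ⟩)

theorem two_powerlt_pow_le {lam γ : Cardinal} (hlam : ℵ₀ ≤ lam) (hγ : γ < lam.ord.cof) :
    (2 ^< lam) ^ γ ≤ 2 ^< lam := by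
  let B (l : lam.ord.ToType) : Set (2 ^< lam).ord.ToType := {a | #(Iio a) < 2 ^ #(Iio l)}
  have hB : Monotone B := fun l l' hll' a ha =>
    ha.trans_le (power_le_power_left two_ne_zero (mk_le_mk_of_subset (Iio_subset_Iio hll')))
  have hcover (a : (2 ^< lam).ord.ToType) : ∃ l, a ∈ B l :=
    exists_lt_two_power_mk_Iio (mk_Iio_ord_toType_lt a)
  have hγlam : γ < lam := hγ.trans_le (cof_ord_le lam)
  have hpiece (l : lam.ord.ToType) : #(γ.ord.ToType → B l) ≤ 2 ^< lam := by
    have hl : #(Iio l) < lam := mk_Iio_ord_toType_lt l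
    calc #(γ.ord.ToType → B l) = #(B l) ^ γ := by rw [← power_def, mk_ord_toType]
      _ ≤ (2 ^ #(Iio l)) ^ γ := power_le_power_right (mk_setOf_mk_Iio_lt_le _)
      _ = 2 ^ (#(Iio l) * γ) := power_mul.symm
      _ ≤ 2 ^< lam := le_powerlt 2 (mul_lt_of_lt hlam hl hγlam)
  calc (2 ^< lam) ^ γ = #(γ.ord.ToType → (2 ^< lam).ord.ToType) := by
        rw [← power_def, mk_ord_toType, mk_ord_toType]
    _ ≤ #lam.ord.ToType * ⨆ l, #(γ.ord.ToType → B l) :=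
        mk_arrow_le_of_monotone_cover hB hcover fun f =>
          bddAbove_range_of_mk_lt_cof f (by simpa using hγ)
    _ ≤ lam * 2 ^< lam := mul_le_mul' (mk_ord_toType lam).le (ciSup_le' hpiece)
    _ = 2 ^< lam := mul_eq_right (hlam.trans (le_two_powerlt lam)) (le_two_powerlt lam)
        (aleph0_pos.trans_le hlam).ne'

theorem two_powerlt_powerlt_cof {lam : Cardinal} (hlam : ℵ₀ ≤ lam) :
    (2 ^< lam) ^< lam.ord.cof = 2 ^< lam := by
  refine le_antisymm (powerlt_le.2 fun γ hγ => two_powerlt_pow_le hlam hγ) ?_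
  have hcof : 1 < lam.ord.cof := one_lt_cof_iff.2 (isSuccLimit_ord hlam)
  simpa using le_powerlt (2 ^< lam) hcof

end Cardinal

/-- for an infinite cardinal `λ` and `λ' = 2^{<λ}`, we have
`(λ')^{<cof(λ)} = λ'`, and `ᴧ2` is homeomorphic to a closed subspace of the space of functions
from `cof(λ)` to `λ'` (with the bounded topologies). -/
theorem statement_14 (lam : Cardinal) (hlam : ℵ₀ ≤ lam) :
    ((2 : Cardinal) ^< lam) ^< lam.ord.cof = (2 : Cardinal) ^< lam ∧
    ∃ C : Set (GSeq (lam.ord.cof).ord.ToType ((2 : Cardinal) ^< lam).ord.ToType),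
      IsClosed C ∧ Nonempty (GSeq lam.ord.ToType (Fin 2) ≃ₜ ↥C) := by
  have : NoMaxOrder lam.ord.ToType := Cardinal.noMaxOrder hlam
  have : NoMaxOrder lam.ord.cof.ord.ToType :=
    Cardinal.noMaxOrder (aleph0_le_cof_iff.2 (one_lt_cof_iff.2 (isSuccLimit_ord hlam)))
  obtain ⟨g, hg, hcof⟩ := exists_strictMono_cof_toType lam.ord
  have hcode (i : lam.ord.cof.ord.ToType) :
      Nonempty ((Iio (g i) → Fin 2) ↪ (2 ^< lam).ord.ToType) := by
    rw [← Cardinal.le_def, mk_ord_toType, ← power_def, mk_fin, Nat.cast_ofNat]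
    exact le_powerlt 2 (Cardinal.mk_Iio_ord_toType_lt _)
  have hΦ := GSeq.isClosedEmbedding_restrictCode (c := fun i => (hcode i).some) hg.monotone hcof
  exact ⟨Cardinal.two_powerlt_powerlt_cof hlam, _, hΦ.isClosed_range, ⟨hΦ.toHomeomorph⟩⟩

end
end

section
/- Let S be a positively totally ordered monoid. Then exactly one of the following holds: (1) there is c ∈ S⁺ such that b + b ≥ c for every b ∈ S⁺; (2) Deg(S) = ℵ₀ and S⁺ contains a sequence (a_i)_{i<ω}, coinitial in S⁺, which is strongly decreasing (a_i + a_i < a_j whenever j < i < ω) and whose set of values {a_i : i < ω} is Archimedean; (3) Deg(S) = δ is an infinite cardinal and S⁺ contains a sequence (a_i)_{i<δ}, coinitial in S⁺, which is nowhere Archimedean decreasing, i.e., a_i ≪ a_j whenever j < i < δ. -/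
open Cardinal Set

noncomputable section

/-- The degree of `S`: the least cardinality of a subset of the positive cone `S⁺`
that is coinitial in `S⁺`. -/
def degree (S : Type*) [Zero S] [LinearOrder S] : Cardinal :=
  ⨅ A : {A : Set S // (∀ a ∈ A, 0 < a) ∧ ∀ ε : S, 0 < ε → ∃ a ∈ A, a ≤ ε}, #↥(A.1)

/-- Case (1): there is `c ∈ S⁺` with `b + b ≥ c` for every `b ∈ S⁺`. -/
def MonoidCase1 (S : Type) [AddMonoid S] [LinearOrder S] : Prop :=
  ∃ c : S, 0 < c ∧ ∀ b : S, 0 < b → c ≤ b + b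

/-- Case (2): `Deg(S) = ℵ₀` and `S⁺` contains a countable, coinitial, strongly decreasing
sequence whose set of values is Archimedean. -/
def MonoidCase2 (S : Type) [AddMonoid S] [LinearOrder S] : Prop :=
  degree S = ℵ₀ ∧ ∃ a : ℕ → S,
    (∀ i, 0 < a i) ∧ (∀ ε : S, 0 < ε → ∃ i, a i ≤ ε) ∧
    (∀ i j : ℕ, j < i → a i + a i < a j) ∧
    (∀ i j : ℕ, 0 < a i → a i < a j → ∃ n : ℕ, a j ≤ n • a i)

/-- Case (3): `Deg(S)` is infinite and `S⁺` contains a coinitial, nowhere Archimedean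
decreasing sequence of length `Deg(S)`. -/
def MonoidCase3 (S : Type) [AddMonoid S] [LinearOrder S] : Prop :=
  ℵ₀ ≤ degree S ∧ ∃ a : (degree S).ord.ToType → S,
    (∀ i, 0 < a i) ∧ (∀ ε : S, 0 < ε → ∃ i, a i ≤ ε) ∧
    ∀ i j : (degree S).ord.ToType, j < i → ∀ n : ℕ, n • a i < a j

/-! If (1) fails, every positive element can be halved. Suppose first that some `w > 0` is
below a multiple of every positive element: iterated halving from `w` then gives a strongly
decreasing sequence which is coinitial (`2ᵏ` copies of its `k`-th term sum to at most `w`) and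
Archimedean (every term is `≤ w`), so (2) holds. Otherwise every positive element lies
infinitely far above some smaller positive one; since fewer than `Deg(S)` positive elements are
never coinitial, a transfinite recursion of length `Deg(S)`, chasing an enumeration of a
coinitial set of size `Deg(S)`, produces the sequence of (3). Both (2) and (3) provide
arbitrarily small halvable elements, against (1), and a sequence as in (3) contains an element
infinitely below `a₀`, against the Archimedean property in (2). -/

variable {S : Type} [AddMonoid S] [LinearOrder S]

namespace IsPTOM

theorem le_add_right (hS : IsPTOM S) (a b : S) : a ≤ a + b :=
  calc a = a + 0 := (add_zero a).symm
    _ ≤ a + b := hS.add_le_add _ _ _ _ le_rfl (hS.zero_le b)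

theorem nsmul_le_nsmul_right (hS : IsPTOM S) {a b : S} (h : a ≤ b) (n : ℕ) :
    n • a ≤ n • b := by
  induction n with
  | zero => simp
  | succ n ih => simpa only [succ_nsmul] using hS.add_le_add _ _ _ _ ih h

theorem nsmul_le_nsmul_left (hS : IsPTOM S) (a : S) {m n : ℕ} (h : m ≤ n) : m • a ≤ n • a := by
  obtain ⟨k, rfl⟩ := Nat.exists_eq_add_of_le h
  simpa only [add_nsmul] using hS.le_add_right (m • a) (k • a)

theorem two_pow_nsmul_le (hS : IsPTOM S) {a : ℕ → S} (ha : ∀ n, a (n + 1) + a (n + 1) ≤ a n)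
    (n : ℕ) : 2 ^ n • a n ≤ a 0 := by
  induction n with
  | zero => simp
  | succ n ih =>
    calc 2 ^ (n + 1) • a (n + 1) = 2 ^ n • (a (n + 1) + a (n + 1)) := by
          rw [pow_succ, mul_nsmul', two_nsmul]
      _ ≤ 2 ^ n • a n := hS.nsmul_le_nsmul_right (ha n) _
      _ ≤ a 0 := ih

end IsPTOM

theorem not_monoidCase1_iff :
    ¬ MonoidCase1 S ↔ ∀ c : S, 0 < c → ∃ b : S, 0 < b ∧ b + b < c := by
  simp only [MonoidCase1, not_exists, not_and, not_forall, not_le, exists_prop]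

theorem degree_le_mk {A : Set S} (hpos : ∀ a ∈ A, 0 < a)
    (hcoinit : ∀ ε : S, 0 < ε → ∃ a ∈ A, a ≤ ε) :
    degree S ≤ #A :=
  ciInf_le' (fun A : {A : Set S // (∀ a ∈ A, 0 < a) ∧ ∀ ε : S, 0 < ε → ∃ a ∈ A, a ≤ ε} => #A.1)
    ⟨A, hpos, hcoinit⟩

theorem exists_coinitial_mk_eq_degree :
    ∃ A : Set S, (∀ a ∈ A, 0 < a) ∧ (∀ ε : S, 0 < ε → ∃ a ∈ A, a ≤ ε) ∧ #A = degree S := by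
  obtain ⟨⟨A, hpos, hcoinit⟩, hA⟩ := csInf_mem
    (⟨_, ⟨{a | 0 < a}, fun _ ha => ha, fun ε hε => ⟨ε, hε, le_rfl⟩⟩, rfl⟩ : (Set.range
      fun A : {A : Set S // (∀ a ∈ A, 0 < a) ∧ ∀ ε : S, 0 < ε → ∃ a ∈ A, a ≤ ε} => #A.1).Nonempty)
  exact ⟨A, hpos, hcoinit, hA⟩

theorem exists_pos_lt_of_mk_lt_degree {T : Set S} (hpos : ∀ t ∈ T, 0 < t) (hT : #T < degree S) :
    ∃ ε : S, 0 < ε ∧ ∀ t ∈ T, ε < t := by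
  by_contra! hcoinit
  exact (degree_le_mk hpos hcoinit).not_gt hT

theorem aleph0_le_degree (hS : IsPTOM S) (h1 : ¬ MonoidCase1 S) : ℵ₀ ≤ degree S := by
  obtain ⟨A, hpos, hcoinit, hA⟩ := exists_coinitial_mk_eq_degree (S := S)
  rw [← hA]
  by_contra! hfin
  obtain ⟨p, hp⟩ := hS.exists_pos
  obtain ⟨a₀, ha₀, -⟩ := hcoinit p hp
  obtain ⟨m, hmA, hmin⟩ :=
    Set.exists_min_image A id (lt_aleph0_iff_set_finite.1 hfin) ⟨a₀, ha₀⟩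
  obtain ⟨b, hb, hbb⟩ := not_monoidCase1_iff.1 h1 m (hpos m hmA)
  obtain ⟨a, haA, hab⟩ := hcoinit b hb
  exact (((hmin a haA).trans hab).trans (hS.le_add_right b b)).not_gt hbb

theorem exists_halving_seq (h1 : ¬ MonoidCase1 S) {w : S} (hw : 0 < w) :
    ∃ a : ℕ → S, a 0 = w ∧ (∀ n, 0 < a n) ∧ ∀ n, a (n + 1) + a (n + 1) < a n := by
  choose half hhalf_pos hhalf using not_monoidCase1_iff.1 h1
  let a : ℕ → {c : S // 0 < c} := fun n => (fun c => ⟨half c.1 c.2, hhalf_pos c.1 c.2⟩)^[n] ⟨w, hw⟩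
  refine ⟨fun n => (a n).1, rfl, fun n => (a n).2, fun n => ?_⟩
  simp only [a, Function.iterate_succ_apply']
  exact hhalf _ _

theorem monoidCase2_of_exists_le_nsmul (hS : IsPTOM S) (h1 : ¬ MonoidCase1 S)
    (hw : ∃ w : S, 0 < w ∧ ∀ ε : S, 0 < ε → ∃ n : ℕ, w ≤ n • ε) : MonoidCase2 S := by
  obtain ⟨w, hw, hw_le⟩ := hw
  obtain ⟨a, ha0, hpos, hhalf⟩ := exists_halving_seq h1 hw
  have hanti : StrictAnti a := strictAnti_nat_of_succ_lt fun n =>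
    (hS.le_add_right _ _).trans_lt (hhalf n)
  have hcoinit : ∀ ε : S, 0 < ε → ∃ i, a i ≤ ε := by
    intro ε hε
    by_contra! hsmall
    obtain ⟨n, hn⟩ := hw_le ε hε
    -- shifting by one makes the final bound strict: `a 1 < w`
    have hshift := hS.two_pow_nsmul_le (a := fun k => a (k + 1)) (fun k => (hhalf (k + 1)).le) n
    have : n • ε < w :=
      calc n • ε ≤ n • a (n + 1) := hS.nsmul_le_nsmul_right (hsmall (n + 1)).le n
        _ ≤ 2 ^ n • a (n + 1) := hS.nsmul_le_nsmul_left _ Nat.lt_two_pow_self.le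
        _ ≤ a 1 := hshift
        _ < w := ha0 ▸ hanti Nat.zero_lt_one
    exact this.not_ge hn
  refine ⟨le_antisymm ?_ (aleph0_le_degree hS h1), a, hpos, hcoinit, ?_, ?_⟩
  · calc degree S ≤ #(Set.range a) :=
          degree_le_mk (by rintro _ ⟨i, rfl⟩; exact hpos i)
            fun ε hε => let ⟨i, hi⟩ := hcoinit ε hε; ⟨a i, ⟨i, rfl⟩, hi⟩
      _ ≤ ℵ₀ := Cardinal.mk_range_le.trans (Cardinal.mk_nat).le
  · rintro (_ | m) j hji
    · exact absurd hji (Nat.not_lt_zero j)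
    · exact (hhalf m).trans_le (hanti.antitone (Nat.lt_succ_iff.1 hji))
  · intro i j hi _
    obtain ⟨n, hn⟩ := hw_le (a i) hi
    exact ⟨n, (hanti.antitone (Nat.zero_le j)).trans (ha0 ▸ hn)⟩

theorem exists_nsmul_lt_of_mk_lt_degree
    (hll : ∀ w : S, 0 < w → ∃ ε : S, 0 < ε ∧ ∀ n : ℕ, n • ε < w)
    {T : Set S} (hpos : ∀ t ∈ T, 0 < t) (hT : #T < degree S) {c : S} (hc : 0 < c) :
    ∃ b : S, 0 < b ∧ b ≤ c ∧ ∀ t ∈ T, ∀ n : ℕ, n • b < t := by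
  obtain ⟨ε, hε, hεT⟩ := exists_pos_lt_of_mk_lt_degree hpos hT
  obtain ⟨b, hb, hbn⟩ := hll (min ε c) (lt_min hε hc)
  refine ⟨b, hb, ?_, fun t ht n => ((hbn n).trans_le (min_le_left _ _)).trans (hεT t ht)⟩
  simpa only [one_nsmul] using ((hbn 1).trans_le (min_le_right _ _)).le

theorem monoidCase3_of_forall_exists_nsmul_lt (hS : IsPTOM S) (h1 : ¬ MonoidCase1 S)
    (hll : ∀ w : S, 0 < w → ∃ ε : S, 0 < ε ∧ ∀ n : ℕ, n • ε < w) : MonoidCase3 S := by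
  obtain ⟨A, hApos, hAcoinit, hA⟩ := exists_coinitial_mk_eq_degree (S := S)
  obtain ⟨e⟩ := Cardinal.eq.1 ((Cardinal.mk_ord_toType (degree S)).trans hA.symm)
  have hstep : ∀ (i : (degree S).ord.ToType) (g : ∀ j < i, {s : S // 0 < s}),
      ∃ b : {s : S // 0 < s}, b.1 ≤ e i ∧ ∀ j (hj : j < i) (n : ℕ), n • b.1 < (g j hj).1 := by
    intro i g
    obtain ⟨b, hb, hbe, hbg⟩ := exists_nsmul_lt_of_mk_lt_degree hll
      (T := Set.range fun j : Set.Iio i => (g j.1 j.2).1) (by rintro _ ⟨j, rfl⟩; exact (g _ _).2)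
      (Cardinal.mk_range_le.trans_lt (by simpa using Cardinal.mk_Iio_lt i)) (hApos _ (e i).2)
    exact ⟨⟨b, hb⟩, hbe, fun j hj => hbg _ ⟨⟨j, hj⟩, rfl⟩⟩
  choose next hnext_le hnext_lt using hstep
  let a := wellFounded_lt.fix next
  have ha : ∀ i, a i = next i fun j _ => a j := wellFounded_lt.fix_eq next
  refine ⟨aleph0_le_degree hS h1, fun i => (a i).1, fun i => (a i).2, fun ε hε => ?_,
    fun i j hji n => by beta_reduce; rw [ha i]; exact hnext_lt i _ j hji n⟩
  obtain ⟨s, hsA, hsε⟩ := hAcoinit ε hε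
  refine ⟨e.symm ⟨s, hsA⟩, (ha _ ▸ hnext_le _ _).trans ?_⟩
  simpa only [Equiv.apply_symm_apply] using hsε

theorem not_monoidCase1_of_monoidCase2 (h2 : MonoidCase2 S) : ¬ MonoidCase1 S := by
  obtain ⟨-, a, hpos, hcoinit, hdec, -⟩ := h2
  refine not_monoidCase1_iff.2 fun c hc => ?_
  obtain ⟨k, hk⟩ := hcoinit c hc
  exact ⟨a (k + 1), hpos _, (hdec _ _ k.lt_succ_self).trans_le hk⟩

theorem not_monoidCase1_of_monoidCase3 (h3 : MonoidCase3 S) : ¬ MonoidCase1 S := by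
  obtain ⟨hδ, a, hpos, hcoinit, hdec⟩ := h3
  have := Cardinal.noMaxOrder hδ
  refine not_monoidCase1_iff.2 fun c hc => ?_
  obtain ⟨k, hk⟩ := hcoinit c hc
  obtain ⟨k', hk'⟩ := exists_gt k
  exact ⟨a k', hpos _, two_nsmul (a k') ▸ (hdec k' k hk' 2).trans_le hk⟩

theorem not_monoidCase2_of_monoidCase3 (hS : IsPTOM S) (h3 : MonoidCase3 S) : ¬ MonoidCase2 S := by
  rintro ⟨-, a, hapos, hacoinit, -, harch⟩
  obtain ⟨hδ, b, hbpos, hbcoinit, hbdec⟩ := h3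
  have := Cardinal.noMaxOrder hδ
  obtain ⟨m, hm⟩ := hbcoinit (a 0) (hapos 0)
  obtain ⟨m', hm'⟩ := exists_gt m
  obtain ⟨k, hk⟩ := hacoinit (b m') (hbpos m')
  have hll : ∀ n : ℕ, n • a k < a 0 := fun n =>
    ((hS.nsmul_le_nsmul_right hk n).trans_lt (hbdec m' m hm' n)).trans_le hm
  obtain ⟨n, hn⟩ := harch k 0 (hapos k) (by simpa only [one_nsmul] using hll 1)
  exact (hll n).not_ge hn

/-- for every positively totally ordered monoid `S`, exactly one of the three
cases holds. -/
theorem statement_15 (S : Type) [AddMonoid S] [LinearOrder S] (hS : IsPTOM S) :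
    (MonoidCase1 S ∧ ¬ MonoidCase2 S ∧ ¬ MonoidCase3 S) ∨
    (¬ MonoidCase1 S ∧ MonoidCase2 S ∧ ¬ MonoidCase3 S) ∨
    (¬ MonoidCase1 S ∧ ¬ MonoidCase2 S ∧ MonoidCase3 S) := by
  by_cases h1 : MonoidCase1 S
  · exact Or.inl ⟨h1, fun h2 => not_monoidCase1_of_monoidCase2 h2 h1,
      fun h3 => not_monoidCase1_of_monoidCase3 h3 h1⟩
  by_cases hw : ∃ w : S, 0 < w ∧ ∀ ε : S, 0 < ε → ∃ n : ℕ, w ≤ n • ε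
  · have h2 := monoidCase2_of_exists_le_nsmul hS h1 hw
    exact Or.inr (Or.inl ⟨h1, h2, fun h3 => not_monoidCase2_of_monoidCase3 hS h3 h2⟩)
  · push Not at hw
    have h3 := monoidCase3_of_forall_exists_nsmul_lt hS h1 hw
    exact Or.inr (Or.inr ⟨h1, not_monoidCase2_of_monoidCase3 hS h3, h3⟩)
end
end

section
/- Let κ and λ be infinite cardinals with κ regular, and assume λ^{<κ} = λ < 𝔠 (this forces κ = ω). Then there exist a family 𝔐 of subsets of ᵏλ and a function μ : 𝔐 → [0, ∞], where [0, ∞] denotes the extended nonnegative real numbers with their usual addition and order, such that (ᵏλ, 𝔐, μ) is a continuous weak λ⁺-measure space which is ω₁-Dirac, i.e., supp(μ) is second countable. -/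
open Cardinal Set

noncomputable section

/-- `(X, M, μ)` is a weak `λ⁺`-measure space (with `lam` playing the role of `λ`):
`M` contains all open sets and is closed under unions of at most `lam` many sets,
and `μ` satisfies the axioms (M1)-(M5). -/
structure IsWeakMeasureSpace (X : Type) [TopologicalSpace X] (lam : Cardinal)
    (S : Type*) [AddMonoid S] [LinearOrder S] (M : Set (Set X)) (μ : Set X → S) : Prop where
  open_mem : ∀ U : Set X, IsOpen U → U ∈ M
  sUnion_mem : ∀ 𝒜 : Set (Set X), 𝒜 ⊆ M → #↥𝒜 ≤ lam → ⋃₀ 𝒜 ∈ M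
  measure_empty : μ ∅ = 0
  measure_univ_pos : 0 < μ Set.univ
  mono : ∀ A B : Set X, A ∈ M → B ∈ M → A ⊆ B → μ A ≤ μ B
  additive : ∀ (γ : Ordinal) (A : γ.ToType → Set X), γ.card ≤ lam →
    (∀ i, A i ∈ M) → Pairwise (Function.onFun Disjoint A) →
    IsLUB {s : S | ∃ F : Finset γ.ToType, s = finSum (fun i => μ (A i)) F} (μ (⋃ i, A i))
  point_reg : ∀ (x : X) (γ : Ordinal) (A : γ.ToType → Set X),
    {x} ∈ M → γ.card ≤ lam →
    (∀ i, IsOpen (A i) ∧ x ∈ A i) →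
    (∀ U : Set X, IsOpen U → x ∈ U → ∃ i, A i ⊆ U) →
    IsGLB (Set.range fun i => μ (A i)) (μ {x})

/-- The support of `μ`: the complement of the union of all open sets of measure `0`. -/
def msupp {X : Type} [TopologicalSpace X] {S : Type*} [Zero S] (μ : Set X → S) : Set X :=
  (⋃₀ {U : Set X | IsOpen U ∧ μ U = 0})ᶜ


/-! The hypotheses force `κ = ω`, for otherwise `𝔠 ≤ λ ^ ω ≤ λ ^< κ = λ`. Then `ᵏλ` is the product
of countably many discrete copies of `λ`: it is first countable and Hausdorff, and it contains a
copy `f : 2^ℕ → ᵏλ` of the Cantor space. Push an atomless probability measure `ρ` on `2^ℕ` forward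
along `f` on open sets, and measure a set `U ∪ B` (`U` open, `|B| ≤ λ`) as its open part `U`.
This ignores small sets consistently because a Borel subset of `2^ℕ` of size `≤ λ < 𝔠` is
countable, hence `ρ`-null. Additivity over `λ` many disjoint sets holds because `2^ℕ` is
Lindelöf, point regularity because `ρ` is atomless and `ᵏλ` is first countable, and the support
lies in the compact, second countable image of `f`. -/

open MeasureTheory Topology Function

universe u

theorem MeasureTheory.measure_iUnion_of_isOpen {α ι : Type*} [TopologicalSpace α]
    [SecondCountableTopology α] [MeasurableSpace α] [OpensMeasurableSpace α] (ρ : Measure α)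
    {s : ι → Set α} (hs : ∀ i, IsOpen (s i)) (hd : Pairwise (Disjoint on s)) :
    ρ (⋃ i, s i) = ∑' i, ρ (s i) := by
  refine le_antisymm ?_ (tsum_meas_le_meas_iUnion_of_disjoint ρ (fun i => (hs i).measurableSet) hd)
  obtain ⟨I, hI, hIs⟩ := TopologicalSpace.isOpen_iUnion_countable s hs
  calc ρ (⋃ i, s i) = ρ (⋃ i ∈ I, s i) := by rw [hIs]
    _ ≤ ∑' i : I, ρ (s i) := measure_biUnion_le ρ hI s
    _ ≤ ∑' i, ρ (s i) := ENNReal.tsum_comp_le_tsum_of_injective Subtype.val_injective _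

theorem MeasurableSet.countable_of_mk_lt_continuum {α : Type*} [MeasurableSpace α]
    [StandardBorelSpace α] {s : Set α} (hs : MeasurableSet s) (h : #s < 𝔠) : s.Countable := by
  by_contra hs_unc
  have := hs.standardBorel
  have hcard : #s = 𝔠 := by
    simpa using Cardinal.lift_mk_eq'.2 ⟨(PolishSpace.measurableEquivNatBoolOfNotCountable
      (α := s) (by rwa [countable_coe_iff])).toEquiv⟩
  exact h.ne hcard

theorem exists_isProbabilityMeasure_nullSingletonClass_natBool :
    ∃ ρ : Measure (ℕ → Bool), IsProbabilityMeasure ρ ∧ NullSingletonClass ρ := by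
  have h_unc : ¬Countable unitInterval := fun h => by
    simpa using (countable_univ (α := unitInterval)).measure_zero volume
  let φ := PolishSpace.measurableEquivNatBoolOfNotCountable h_unc
  refine ⟨volume.map φ, Measure.isProbabilityMeasure_map φ.measurable.aemeasurable,
    ⟨fun ω => ?_⟩⟩
  rw [φ.map_apply]
  exact (subsingleton_singleton.preimage φ.injective).measure_zero volume

theorem Cardinal.mk_iUnion_le_of_le {α ι : Type u} {lam : Cardinal} (hlam : ℵ₀ ≤ lam)
    (hι : #ι ≤ lam) {s : ι → Set α} (hs : ∀ i, #(s i) ≤ lam) : #(⋃ i, s i) ≤ lam :=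
  calc #(⋃ i, s i) ≤ #ι * ⨆ i, #(s i) := mk_iUnion_le s
    _ ≤ lam * lam := mul_le_mul' hι (ciSup_le' hs)
    _ = lam := mul_eq_self hlam

theorem Cardinal.le_aleph0_of_powerlt_eq_self {κ lam : Cardinal} (h2 : 2 ≤ lam)
    (hpow : lam ^< κ = lam) (hc : lam < 𝔠) : κ ≤ ℵ₀ := by
  by_contra! hκ
  refine hc.not_ge ?_
  calc 𝔠 = 2 ^ ℵ₀ := two_power_aleph0.symm
    _ ≤ lam ^ ℵ₀ := power_le_power_right h2
    _ ≤ lam ^< κ := le_powerlt lam hκ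
    _ = lam := hpow

theorem Cardinal.nonempty_orderIso_nat_toType_ord_aleph0 :
    Nonempty (ℕ ≃o (ℵ₀ : Cardinal.{0}).ord.ToType) := by
  have h : Ordinal.type (α := ℕ) (· < ·) =
      Ordinal.type (α := (ℵ₀ : Cardinal.{0}).ord.ToType) (· < ·) := by
    rw [Ordinal.type_toType, ord_aleph0, Ordinal.type_nat_lt]
  exact ⟨OrderIso.ofRelIsoLT (Ordinal.type_eq.1 h).some⟩

theorem Topology.IsInducing.secondCountableTopology_of_subset_range {T X : Type*}
    [TopologicalSpace T] [TopologicalSpace X] [SecondCountableTopology T] {f : T → X}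
    (hf : IsInducing f) {S : Set X} (hS : S ⊆ range f) : SecondCountableTopology S := by
  choose g hg using fun s : S => hS s.2
  have hfg : f ∘ g = Subtype.val := funext hg
  exact ((hf.of_comp_iff).1 (hfg ▸ IsInducing.subtypeVal)).secondCountableTopology

theorem finSum_eq_sum {ι S : Type*} [LinearOrder ι] [AddCommMonoid S] (f : ι → S)
    (F : Finset ι) : finSum f F = ∑ i ∈ F, f i := by
  rw [finSum, List.Perm.sum_eq ((F.sort_perm_toList (· ≤ ·)).map f), Finset.sum_map_toList]

section ModSmall

variable {T X : Type} [TopologicalSpace X] (lam : Cardinal)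

def openModSmall : Set (Set X) := {E | ∃ U B : Set X, IsOpen U ∧ #B ≤ lam ∧ E = U ∪ B}

variable {lam}

theorem mem_openModSmall_of_mk_le {B : Set X} (hB : #B ≤ lam) : B ∈ openModSmall lam :=
  ⟨∅, B, isOpen_empty, hB, (empty_union B).symm⟩

theorem iUnion_mem_openModSmall (hlam : ℵ₀ ≤ lam) {ι : Type} (hι : #ι ≤ lam)
    {A : ι → Set X} (hA : ∀ i, A i ∈ openModSmall lam) : ⋃ i, A i ∈ openModSmall lam := by
  choose U B hU hB hA using hA
  refine ⟨⋃ i, U i, ⋃ i, B i, isOpen_iUnion hU, mk_iUnion_le_of_le hlam hι hB, ?_⟩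
  rw [← iUnion_union_distrib]
  exact iUnion_congr hA

variable (lam) [MeasurableSpace T] (ρ : Measure T) (f : T → X)

def pushforwardModSmall (E : Set X) : ENNReal :=
  ⨅ (V : Set X) (_ : IsOpen V ∧ #↥(E \ V) ≤ lam), ρ (f ⁻¹' V)

variable {lam ρ f}

theorem pushforwardModSmall_le {E V : Set X} (hV : IsOpen V) (h : #↥(E \ V) ≤ lam) :
    pushforwardModSmall lam ρ f E ≤ ρ (f ⁻¹' V) :=
  iInf₂_le V ⟨hV, h⟩

theorem pushforwardModSmall_le_of_isOpen {V : Set X} (hV : IsOpen V) :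
    pushforwardModSmall lam ρ f V ≤ ρ (f ⁻¹' V) :=
  pushforwardModSmall_le hV (by simp)

theorem pushforwardModSmall_mono {E F : Set X} (h : E ⊆ F) :
    pushforwardModSmall lam ρ f E ≤ pushforwardModSmall lam ρ f F :=
  le_iInf₂ fun _ hV =>
    pushforwardModSmall_le hV.1 ((mk_le_mk_of_subset (sdiff_subset_sdiff_left h)).trans hV.2)

theorem pushforwardModSmall_eq_zero_of_mk_le {B : Set X} (hB : #B ≤ lam) :
    pushforwardModSmall lam ρ f B = 0 :=
  nonpos_iff_eq_zero.1 <| (pushforwardModSmall_le isOpen_empty (by rwa [sdiff_empty])).trans_eq <|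
    by simp

theorem pushforwardModSmall_singleton (hlam : ℵ₀ ≤ lam) (x : X) :
    pushforwardModSmall lam ρ f {x} = 0 :=
  pushforwardModSmall_eq_zero_of_mk_le (by simpa using one_le_aleph0.trans hlam)

theorem msupp_pushforwardModSmall_subset_closure_range :
    msupp (pushforwardModSmall lam ρ f) ⊆ closure (range f) := by
  intro x hx
  by_contra hxf
  have hopen : IsOpen (closure (range f))ᶜ := isClosed_closure.isOpen_compl
  refine hx (mem_sUnion_of_mem hxf ⟨hopen, nonpos_iff_eq_zero.1 ?_⟩)
  refine (pushforwardModSmall_le_of_isOpen hopen).trans_eq ?_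
  rw [preimage_eq_empty (disjoint_compl_left.mono_right subset_closure), measure_empty]

theorem measureContinuous_pushforwardModSmall (hlam : ℵ₀ ≤ lam) :
    MeasureContinuous (openModSmall lam) (pushforwardModSmall lam ρ f) := fun x =>
  ⟨mem_openModSmall_of_mk_le (by simpa using one_le_aleph0.trans hlam),
    pushforwardModSmall_singleton hlam x⟩

variable [TopologicalSpace T]

theorem secondCountableTopology_msupp_pushforwardModSmall [CompactSpace T]
    [SecondCountableTopology T] [T2Space X] (hf : Continuous f) (hinj : Injective f) :
    SecondCountableTopology (msupp (pushforwardModSmall lam ρ f)) := by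
  refine (hf.isClosedEmbedding hinj).isInducing.secondCountableTopology_of_subset_range ?_
  simpa [(isCompact_range hf).isClosed.closure_eq] using
    msupp_pushforwardModSmall_subset_closure_range (lam := lam) (ρ := ρ) (f := f)

variable [OpensMeasurableSpace T] [NullSingletonClass ρ]

theorem iInf_measure_preimage_nhds_eq_zero [FirstCountableTopology X] [T1Space X]
    [IsFiniteMeasure ρ] (hf : Continuous f) (hinj : Injective f) (x : X) :
    ⨅ (W : Set X) (_ : IsOpen W ∧ x ∈ W), ρ (f ⁻¹' W) = 0 := by
  obtain ⟨W, hW, hWx⟩ := (nhds_basis_opens x).exists_antitone_subbasis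
  have hker : ⋂ n, W n ⊆ {x} := fun y hy => by
    by_contra hyx
    obtain ⟨n, hn⟩ := hWx.mem_iff.1 (isOpen_compl_singleton.mem_nhds (Ne.symm hyx))
    exact hn (mem_iInter.1 hy n) rfl
  have hlim := tendsto_measure_iInter_atTop (μ := ρ) (s := fun n => f ⁻¹' W n)
    (fun n => ((hW n).2.preimage hf).measurableSet.nullMeasurableSet)
    (fun _ _ hmn => preimage_mono (hWx.antitone hmn)) ⟨0, measure_ne_top ρ _⟩
  have hnull : ρ (⋂ n, f ⁻¹' W n) = 0 := by
    rw [← preimage_iInter]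
    exact ((subsingleton_singleton.preimage hinj).anti (preimage_mono hker)).measure_zero ρ
  rw [hnull] at hlim
  refine nonpos_iff_eq_zero.1 <| ge_of_tendsto' hlim fun n => ?_
  exact iInf₂_le (W n) ⟨(hW n).2, (hW n).1⟩

variable [StandardBorelSpace T]

-- `f ⁻¹' (U \ V)` is a Borel set of size `< 𝔠`, hence countable, hence `ρ`-null.
theorem measure_preimage_le_of_mk_diff_le (hf : Continuous f) (hinj : Injective f)
    (hc : lam < 𝔠) {U V : Set X} (hU : IsOpen U) (hV : IsOpen V) (h : #↥(U \ V) ≤ lam) :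
    ρ (f ⁻¹' U) ≤ ρ (f ⁻¹' V) := by
  have hmeas : MeasurableSet (f ⁻¹' (U \ V)) :=
    (hU.preimage hf).measurableSet.diff (hV.preimage hf).measurableSet
  have hcount : (f ⁻¹' (U \ V)).Countable :=
    hmeas.countable_of_mk_lt_continuum <| ((mk_preimage_of_injective f _ hinj).trans h).trans_lt hc
  exact measure_mono_ae <| ae_le_set.2 <| hcount.measure_zero ρ

theorem pushforwardModSmall_union (hf : Continuous f) (hinj : Injective f) (hc : lam < 𝔠)
    {U B : Set X} (hU : IsOpen U) (hB : #B ≤ lam) :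
    pushforwardModSmall lam ρ f (U ∪ B) = ρ (f ⁻¹' U) := by
  refine le_antisymm (pushforwardModSmall_le hU ?_) (le_iInf₂ fun V hV => ?_)
  · exact (mk_le_mk_of_subset fun y hy => hy.1.resolve_left hy.2).trans hB
  · exact measure_preimage_le_of_mk_diff_le hf hinj hc hU hV.1
      ((mk_le_mk_of_subset (sdiff_subset_sdiff_left subset_union_left)).trans hV.2)

theorem pushforwardModSmall_iUnion [SecondCountableTopology T] (hf : Continuous f)
    (hinj : Injective f) (hlam : ℵ₀ ≤ lam) (hc : lam < 𝔠) {ι : Type} (hι : #ι ≤ lam)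
    {A : ι → Set X} (hA : ∀ i, A i ∈ openModSmall lam) (hd : Pairwise (Disjoint on A)) :
    pushforwardModSmall lam ρ f (⋃ i, A i) = ∑' i, pushforwardModSmall lam ρ f (A i) := by
  choose U B hU hB hA using hA
  obtain rfl : A = fun i => U i ∪ B i := funext hA
  have hUd : Pairwise (Disjoint on fun i => f ⁻¹' U i) := fun i j hij =>
    ((hd hij).mono subset_union_left subset_union_left).preimage f
  beta_reduce
  rw [iUnion_union_distrib,
    pushforwardModSmall_union hf hinj hc (isOpen_iUnion hU) (mk_iUnion_le_of_le hlam hι hB),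
    preimage_iUnion, measure_iUnion_of_isOpen ρ (fun i => (hU i).preimage hf) hUd]
  exact tsum_congr fun i => (pushforwardModSmall_union hf hinj hc (hU i) (hB i)).symm

theorem isWeakMeasureSpace_pushforwardModSmall [SecondCountableTopology T]
    [FirstCountableTopology X] [T1Space X] [IsFiniteMeasure ρ] [NeZero ρ] (hf : Continuous f)
    (hinj : Injective f) (hlam : ℵ₀ ≤ lam) (hc : lam < 𝔠) :
    IsWeakMeasureSpace X lam ENNReal (openModSmall lam) (pushforwardModSmall lam ρ f) where
  open_mem U hU := ⟨U, ∅, hU, by simp, (union_empty U).symm⟩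
  sUnion_mem 𝒜 h𝒜 h𝒜lam := by
    rw [sUnion_eq_iUnion]
    exact iUnion_mem_openModSmall hlam h𝒜lam fun A => h𝒜 A.2
  measure_empty := pushforwardModSmall_eq_zero_of_mk_le (by simp)
  measure_univ_pos := by
    rw [← union_empty univ, pushforwardModSmall_union hf hinj hc isOpen_univ (by simp),
      preimage_univ]
    exact Measure.measure_univ_pos.2 (NeZero.ne ρ)
  mono _ _ _ _ := pushforwardModSmall_mono
  additive γ A hγ hA hd := by
    have hsums : {s | ∃ F, s = finSum (fun i => pushforwardModSmall lam ρ f (A i)) F}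
        = range fun F => ∑ i ∈ F, pushforwardModSmall lam ρ f (A i) := by
      ext
      simp [finSum_eq_sum, eq_comm]
    rw [hsums, pushforwardModSmall_iUnion hf hinj hlam hc (by rwa [mk_toType]) hA hd,
      ENNReal.tsum_eq_iSup_sum]
    exact isLUB_iSup
  point_reg x γ A _ _ hA hbasis := by
    rw [pushforwardModSmall_singleton hlam]
    refine ⟨forall_mem_range.2 fun _ => zero_le, fun b hb => ?_⟩
    rw [← iInf_measure_preimage_nhds_eq_zero (ρ := ρ) hf hinj x]
    refine le_iInf₂ fun W ⟨hW, hxW⟩ => ?_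
    obtain ⟨i, hiW⟩ := hbasis W hW hxW
    calc b ≤ pushforwardModSmall lam ρ f (A i) := hb (mem_range_self i)
      _ ≤ pushforwardModSmall lam ρ f W := pushforwardModSmall_mono hiW
      _ ≤ ρ (f ⁻¹' W) := pushforwardModSmall_le_of_isOpen hW

end ModSmall

namespace GSeq

variable {ι A : Type} [LinearOrder ι]

theorem topologicalSpace_eq_pi [TopologicalSpace A] [DiscreteTopology A] (e : ℕ ≃o ι) :
    GSeq.topologicalSpace ι A = (Pi.topologicalSpace : TopologicalSpace (ι → A)) := by
  refine le_antisymm (continuous_id_iff_le.1 <| continuous_pi fun i => ?_) (le_generateFrom ?_)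
  · refine continuous_discrete_rng.2 fun a => isOpen_iff_forall_mem_open.2 fun y hy => ?_
    have hi : i < e (e.symm i + 1) := by simpa using e.lt_iff_lt.2 (Nat.lt_succ_self (e.symm i))
    exact ⟨{z | ∀ j, j < e (e.symm i + 1) → z j = y j}, fun z hz => (hz i hi).trans hy,
      TopologicalSpace.isOpen_generateFrom_of_mem ⟨y, _, rfl⟩, fun _ _ => rfl⟩
  · rintro _ ⟨x, b, rfl⟩
    have hfin : (Iio b).Finite := by
      simpa [e.image_Iio] using (finite_Iio (e.symm b)).image e
    have hcone : {y : GSeq ι A | ∀ i, i < b → y i = x i} =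
        ⋂ i ∈ Iio b, (fun y => y i) ⁻¹' {x i} := by
      ext
      simp
    rw [hcone]
    exact hfin.isOpen_biInter fun i _ => (isOpen_discrete _).preimage (continuous_apply i)

def homeomorphPi [TopologicalSpace A] [DiscreteTopology A] (e : ℕ ≃o ι) :
    GSeq ι A ≃ₜ (ι → A) where
  toEquiv := Equiv.refl _
  continuous_toFun := continuous_id_of_le (topologicalSpace_eq_pi e).le
  continuous_invFun := continuous_id_of_le (topologicalSpace_eq_pi e).ge

theorem t2Space (e : ℕ ≃o ι) : T2Space (GSeq ι A) :=
  letI : TopologicalSpace A := ⊥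
  haveI : DiscreteTopology A := ⟨rfl⟩
  (homeomorphPi e).isEmbedding.t2Space

theorem firstCountableTopology (e : ℕ ≃o ι) : FirstCountableTopology (GSeq ι A) :=
  letI : TopologicalSpace A := ⊥
  haveI : DiscreteTopology A := ⟨rfl⟩
  haveI : Countable ι := e.symm.injective.countable
  (homeomorphPi e).isInducing.firstCountableTopology

theorem exists_continuous_injective_natBool [Nontrivial A] (e : ℕ ≃o ι) :
    ∃ f : (ℕ → Bool) → GSeq ι A, Continuous f ∧ Injective f := by
  let _ : TopologicalSpace A := ⊥
  have : DiscreteTopology A := ⟨rfl⟩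
  obtain ⟨a₀, a₁, ha⟩ := exists_pair_ne A
  let g : Bool → A := fun b => bif b then a₁ else a₀
  have hg : Injective g := by
    intro b b' h
    cases b <;> cases b' <;> simp_all [g, eq_comm]
  refine ⟨fun ω => (homeomorphPi e).symm fun i => g (ω (e.symm i)), ?_, fun ω ω' h => ?_⟩
  · exact (homeomorphPi e).symm.continuous.comp <|
      continuous_pi fun i => (continuous_of_discreteTopology (f := g)).comp (continuous_apply _)
  · funext n
    simpa using hg (congrFun ((homeomorphPi e).symm.injective h) (e n))

end GSeq

/-- if `κ` is regular, `λ` infinite, `λ^{<κ} = λ < 𝔠`, then there is a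
continuous, `ω₁`-Dirac weak `λ⁺`-measure space on `ᵏλ` with values in the extended
nonnegative reals `[0, ∞]`. -/
theorem statement_17 (κ lam : Cardinal) (hκ : κ.IsRegular) (hlam : ℵ₀ ≤ lam)
    (hpow : lam ^< κ = lam) (hc : lam < Cardinal.continuum) :
    ∃ (M : Set (Set (GSeq κ.ord.ToType lam.ord.ToType)))
      (μ : Set (GSeq κ.ord.ToType lam.ord.ToType) → ENNReal),
      IsWeakMeasureSpace (GSeq κ.ord.ToType lam.ord.ToType) lam ENNReal M μ ∧
      MeasureContinuous M μ ∧
      SecondCountableTopology ↥(msupp μ) := by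
  have h2 : (2 : Cardinal) ≤ lam := (natCast_lt_aleph0 (n := 2)).le.trans hlam
  obtain rfl : κ = ℵ₀ := (le_aleph0_of_powerlt_eq_self h2 hpow hc).antisymm hκ.aleph0_le
  obtain ⟨e⟩ := nonempty_orderIso_nat_toType_ord_aleph0
  have : Nontrivial lam.ord.ToType := by
    rw [← one_lt_iff_nontrivial, mk_ord_toType]
    exact one_lt_aleph0.trans_le hlam
  have := GSeq.t2Space (A := lam.ord.ToType) e
  have := GSeq.firstCountableTopology (A := lam.ord.ToType) e
  obtain ⟨f, hf, hinj⟩ := GSeq.exists_continuous_injective_natBool (A := lam.ord.ToType) e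
  obtain ⟨ρ, _, _⟩ := exists_isProbabilityMeasure_nullSingletonClass_natBool
  exact ⟨_, _, isWeakMeasureSpace_pushforwardModSmall hf hinj hlam hc,
    measureContinuous_pushforwardModSmall (ρ := ρ) hlam,
    secondCountableTopology_msupp_pushforwardModSmall hf hinj⟩

end
end
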